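/- For y in a domain avoiding 0, 1, 9, the Wronskian identity W = ψ₁ψ₂' − ψ₂ψ₁' = −6πi/(y(1−y)(9−y)) for solutions of the sunrise equation transforms under x = −(y−1)(y−9)/y and ψᵢ = √y ψᵢ^{sunrise} into W_x = ψ₁ dψ₂/dx − ψ₂ dψ₁/dx = 6πi/(x√(4−x)√(16−x)), where √(4−x)√(16−x) = −(y+3)(y−3)/y. -/

import Mathlib

/-!
On `x < 0` the branch `y = Ybr x` is a root of `y² + (x - 10) y + 9 = 0` lying in `(0, 1)`, i.e. it
inverts `x = -(y - 1)(y - 9)/y` there, so `dy/dx = y² / (9 - y²)` by the inverse function rule.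
Rescaling by `√y` and reparametrising by `y` multiplies a Wronskian by `(√y)² · dy/dx`, which turns
`-6πi / (y(1 - y)(9 - y))` into `6πi / (x · (9 - y²)/y)`, and `(9 - y²)/y = √((4 - x)(16 - x))`.
-/

open Complex in
/-- The branch of the inverse of `y ↦ -(y-1)*(y-9)/y` containing `(x,y) = (0,1)`. -/
noncomputable def Ybr (x : ℝ) : ℝ := (10 - x - Real.sqrt ((4-x)*(16-x)))/2

section Wronskian

variable {𝕜 𝔸 : Type*} [NontriviallyNormedField 𝕜] [NormedCommRing 𝔸] [NormedAlgebra 𝕜 𝔸]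

theorem wronskian_mul_comp {w f₁ f₂ : 𝕜 → 𝔸} {φ : 𝕜 → 𝕜} {w' f₁' f₂' : 𝔸} {φ' x : 𝕜}
    (hw : HasDerivAt w w' x) (hφ : HasDerivAt φ φ' x)
    (hf₁ : HasDerivAt f₁ f₁' (φ x)) (hf₂ : HasDerivAt f₂ f₂' (φ x)) :
    w x * f₁ (φ x) * deriv (fun u => w u * f₂ (φ u)) x
        - w x * f₂ (φ x) * deriv (fun u => w u * f₁ (φ u)) x
      = w x ^ 2 * φ' • (f₁ (φ x) * f₂' - f₂ (φ x) * f₁') := by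
  have hd₁ : HasDerivAt (fun u => w u * f₁ (φ u)) (w' * f₁ (φ x) + w x * φ' • f₁') x :=
    hw.mul (hf₁.scomp x hφ)
  have hd₂ : HasDerivAt (fun u => w u * f₂ (φ u)) (w' * f₂ (φ x) + w x * φ' • f₂') x :=
    hw.mul (hf₂.scomp x hφ)
  rw [hd₁.deriv, hd₂.deriv]
  simp only [Algebra.smul_def]
  ring

end Wronskian

noncomputable def sunriseX (y : ℝ) : ℝ := -(y - 1) * (y - 9) / y

theorem hasDerivAt_sunriseX {y : ℝ} (hy : y ≠ 0) :
    HasDerivAt sunriseX (-(y ^ 2 - 9) / y ^ 2) y := by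
  refine ((((hasDerivAt_id' y).sub_const 1).fun_neg.fun_mul
    ((hasDerivAt_id' y).sub_const 9)).fun_div (hasDerivAt_id' y) hy).congr_deriv ?_
  field_simp
  ring

theorem Ybr_quadratic_eq_zero {x : ℝ} (hx : x ≤ 4) : Ybr x ^ 2 + (x - 10) * Ybr x + 9 = 0 := by
  have hsq := Real.sq_sqrt (mul_nonneg (by linarith : (0:ℝ) ≤ 4 - x) (by linarith : (0:ℝ) ≤ 16 - x))
  unfold Ybr
  linear_combination (1 / 4 : ℝ) * hsq

theorem Ybr_mul_sqrt {x : ℝ} (hx : x ≤ 4) :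
    Ybr x * Real.sqrt ((4 - x) * (16 - x)) = 9 - Ybr x ^ 2 := by
  have hsq := Real.sq_sqrt (mul_nonneg (by linarith : (0:ℝ) ≤ 4 - x) (by linarith : (0:ℝ) ≤ 16 - x))
  unfold Ybr
  linear_combination (-1 / 4 : ℝ) * hsq

theorem Ybr_ne_zero {x : ℝ} (hx : x ≤ 4) : Ybr x ≠ 0 := by
  intro h
  simpa [h] using Ybr_quadratic_eq_zero hx

theorem sunriseX_Ybr {x : ℝ} (hx : x ≤ 4) : sunriseX (Ybr x) = x := by
  have hy := Ybr_ne_zero hx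
  unfold sunriseX
  field_simp
  linear_combination -Ybr_quadratic_eq_zero hx

theorem sqrt_mul_sqrt_eq_Ybr {x : ℝ} (hx : x ≤ 4) :
    Real.sqrt (4 - x) * Real.sqrt (16 - x) = -(Ybr x + 3) * (Ybr x - 3) / Ybr x := by
  rw [← Real.sqrt_mul (by linarith), eq_div_iff (Ybr_ne_zero hx), mul_comm, Ybr_mul_sqrt hx]
  ring

theorem Ybr_mem_Ioo_of_neg {x : ℝ} (hx : x < 0) : Ybr x ∈ Set.Ioo 0 1 := by
  have hlt : Real.sqrt ((4 - x) * (16 - x)) < 10 - x :=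
    (Real.sqrt_lt' (by linarith)).2 (by nlinarith)
  have hgt : 8 - x < Real.sqrt ((4 - x) * (16 - x)) :=
    (Real.lt_sqrt (by linarith)).2 (by nlinarith)
  constructor <;> unfold Ybr <;> linarith

theorem continuous_Ybr : Continuous Ybr := by
  unfold Ybr
  fun_prop

theorem hasDerivAt_Ybr {x : ℝ} (hx : x < 4) :
    HasDerivAt Ybr (Ybr x ^ 2 / (9 - Ybr x ^ 2)) x := by
  have hy := Ybr_ne_zero hx.le
  have h9 : 9 - Ybr x ^ 2 ≠ 0 := by
    rw [← Ybr_mul_sqrt hx.le]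
    exact mul_ne_zero hy (Real.sqrt_pos.2 (by nlinarith)).ne'
  have hinv := (hasDerivAt_sunriseX hy).of_local_left_inverse continuous_Ybr.continuousAt
    (div_ne_zero (by rwa [neg_sub]) (pow_ne_zero 2 hy))
    ((eventually_lt_nhds hx).mono fun u hu => sunriseX_Ybr hu.le)
  rwa [neg_sub, inv_div] at hinv

theorem sunrise_wronskian_rescale_eq {K : Type*} [Field K] {y a : K} (hy : y ≠ 0)
    (h1 : 1 - y ≠ 0) (h9 : 9 - y ≠ 0) (h3 : 9 - y ^ 2 ≠ 0) :
    y * (y ^ 2 / (9 - y ^ 2) * (a / (y * (1 - y) * (9 - y))))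
      = -a / (-(y - 1) * (y - 9) / y * (-(y + 3) * (y - 3) / y)) := by
  rw [show -(y - 1) * (y - 9) = -((1 - y) * (9 - y)) by ring,
    show -(y + 3) * (y - 3) = 9 - y ^ 2 by ring]
  field_simp

theorem wronskian_transformation_general
    (s : Set ℝ) (hxs : ∀ x ∈ s, x < 0)
    (ψs₁ ψs₂ ψs₁' ψs₂' : ℝ → ℂ)
    (h1 : ∀ y ∈ Set.Ioo (0:ℝ) 1, HasDerivAt ψs₁ (ψs₁' y) y)
    (h2 : ∀ y ∈ Set.Ioo (0:ℝ) 1, HasDerivAt ψs₂ (ψs₂' y) y)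
    (hW : ∀ y ∈ Set.Ioo (0:ℝ) 1,
      ψs₁ y * ψs₂' y - ψs₂ y * ψs₁' y
        = -6*Real.pi*Complex.I/((y:ℂ)*(1-y)*(9-y))) :
    ∀ x ∈ s,
      Real.sqrt (4-x) * Real.sqrt (16-x) = -(Ybr x + 3)*(Ybr x - 3)/(Ybr x) ∧
      (Real.sqrt (Ybr x) : ℂ) * ψs₁ (Ybr x)
          * deriv (fun u => (Real.sqrt (Ybr u) : ℂ) * ψs₂ (Ybr u)) x
        - (Real.sqrt (Ybr x) : ℂ) * ψs₂ (Ybr x)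
          * deriv (fun u => (Real.sqrt (Ybr u) : ℂ) * ψs₁ (Ybr u)) x
      = 6*Real.pi*Complex.I
          / ((x:ℂ) * (Real.sqrt (4-x) : ℝ) * (Real.sqrt (16-x) : ℝ)) := by
  intro x hx
  have hx0 := hxs x hx
  have hy := Ybr_mem_Ioo_of_neg hx0
  have hx4 : x < 4 := by linarith
  have hYbr := hasDerivAt_Ybr hx4
  have hw : HasDerivAt (fun u => (Real.sqrt (Ybr u) : ℂ)) _ x :=
    ((Real.hasDerivAt_sqrt hy.1.ne').comp x hYbr).ofReal_comp
  refine ⟨sqrt_mul_sqrt_eq_Ybr hx4.le, ?_⟩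
  rw [wronskian_mul_comp hw hYbr (h1 _ hy) (h2 _ hy), hW _ hy, mul_assoc (x : ℂ),
    ← Complex.ofReal_mul, sqrt_mul_sqrt_eq_Ybr hx4.le, ← Complex.ofReal_pow,
    Real.sq_sqrt hy.1.le, Complex.real_smul]
  obtain ⟨hy0, hy1⟩ := hy
  have hxy := sunriseX_Ybr hx4.le
  set y := Ybr x
  rw [← hxy, sunriseX]
  push_cast
  rw [sunrise_wronskian_rescale_eq (by exact_mod_cast hy0.ne')
    (by exact_mod_cast (by linarith : (1 : ℝ) - y ≠ 0))
    (by exact_mod_cast (by linarith : (9 : ℝ) - y ≠ 0))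
    (by exact_mod_cast (by nlinarith : 9 - y ^ 2 ≠ 0))]
  ring

theorem wronskian_transformation
    (s : Set ℝ) (hs : IsOpen s) (hxs : ∀ x ∈ s, x < 0)
    (ψs₁ ψs₂ ψs₁' ψs₂' : ℝ → ℂ)
    (h1 : ∀ y ∈ Set.Ioo (0:ℝ) 1, HasDerivAt ψs₁ (ψs₁' y) y)
    (h2 : ∀ y ∈ Set.Ioo (0:ℝ) 1, HasDerivAt ψs₂ (ψs₂' y) y)
    (hW : ∀ y ∈ Set.Ioo (0:ℝ) 1,
      ψs₁ y * ψs₂' y - ψs₂ y * ψs₁' y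
        = -6*Real.pi*Complex.I/((y:ℂ)*(1-y)*(9-y))) :
    ∀ x ∈ s,
      Real.sqrt (4-x) * Real.sqrt (16-x) = -(Ybr x + 3)*(Ybr x - 3)/(Ybr x) ∧
      (Real.sqrt (Ybr x) : ℂ) * ψs₁ (Ybr x)
          * deriv (fun u => (Real.sqrt (Ybr u) : ℂ) * ψs₂ (Ybr u)) x
        - (Real.sqrt (Ybr x) : ℂ) * ψs₂ (Ybr x)
          * deriv (fun u => (Real.sqrt (Ybr u) : ℂ) * ψs₁ (Ybr u)) x
      = 6*Real.pi*Complex.I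
          / ((x:ℂ) * (Real.sqrt (4-x) : ℝ) * (Real.sqrt (16-x) : ℝ)) :=
  wronskian_transformation_general s hxs ψs₁ ψs₂ ψs₁' ψs₂' h1 h2 hW
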